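/- arXiv:1203.1608 — 5 statements merged into one kernel-verified Lean document; each statement's English description precedes it below -/
import Mathlib

section
/- A short exact sequence 0 → ℤ/2 → A → B → 0 of abelian groups splits if and only if the associated homomorphism Tor₂(B) → ℤ/2 (sending b to the unique t with u(t) = 2a for h(a) = b) is the zero homomorphism. -/
/-!
The sequence splits iff `u` has a retraction `A →+ ZMod p`. For a split sequence the lifts of
`p`-torsion elements of `B` are `p`-torsion, since `A ≅ ZMod p × B`. Conversely, the condition
says exactly that `u 1` is not divisible by `p` in `A`, i.e. it has nonzero image in the
`𝔽_p`-vector space `A / pA`; a linear functional on `A / pA` taking the value `1` there is the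
required retraction.
-/

theorem AddMonoidHom.exists_eq_one_of_forall_nsmul_ne {A : Type*} [AddCommGroup A]
    (p : ℕ) [Fact p.Prime] {x : A} (hx : ∀ a : A, p • a ≠ x) :
    ∃ r : A →+ ZMod p, r x = 1 := by
  let H := (nsmulAddMonoidHom (α := A) p).range
  -- `r` is only needed as an additive map, so no particular module structure has to be kept.
  obtain ⟨_⟩ : Nonempty (Module (ZMod p) (A ⧸ H)) :=
    ⟨QuotientAddGroup.zmodModule fun a => ⟨a, rfl⟩⟩
  have hx' : (x : A ⧸ H) ≠ 0 := by
    rw [Ne, QuotientAddGroup.eq_zero_iff]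
    rintro ⟨a, ha⟩
    exact hx a ha
  obtain ⟨f, hf⟩ := Module.Projective.exists_dual_eq_one (ZMod p) hx'
  exact ⟨f.toAddMonoidHom.comp (QuotientAddGroup.mk' H), hf⟩

theorem AddMonoidHom.exists_rightInverse_of_leftInverse {C A B : Type*} [AddCommGroup C]
    [AddCommGroup A] [AddCommGroup B] {u : C →+ A} {h : A →+ B}
    (hh : Function.Surjective h) (hex : u.range = h.ker)
    {r : A →+ C} (hr : ∀ c, r (u c) = c) : ∃ s : B →+ A, ∀ b, h (s b) = b := by
  have hexact : Function.Exact u.toIntLinearMap h.toIntLinearMap := fun a => by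
    simpa [eq_comm] using (SetLike.ext_iff.mp hex a).symm
  have hsplit := hexact.split_tfae'.out 1 0
  obtain ⟨-, s, hs⟩ := hsplit.mp ⟨hh, r.toIntLinearMap, LinearMap.ext hr⟩
  exact ⟨s.toAddMonoidHom, LinearMap.congr_fun hs⟩

theorem AddMonoidHom.nsmul_eq_zero_of_rightInverse {n : ℕ} {A B : Type*} [AddCommGroup A]
    [AddCommGroup B] {u : ZMod n →+ A} {h : A →+ B} (hex : u.range = h.ker)
    {s : B →+ A} (hs : ∀ b, h (s b) = b) {a : A} (ha : n • h a = 0) : n • a = 0 := by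
  obtain ⟨t, ht⟩ : a - s (h a) ∈ u.range := by
    rw [hex, AddMonoidHom.mem_ker, map_sub, hs, sub_self]
  rw [← sub_add_cancel a (s (h a)), ← ht, nsmul_add, ← map_nsmul, ← map_nsmul, ha,
    ZModModule.char_nsmul_eq_zero, map_zero, map_zero, add_zero]

theorem AddMonoidHom.exists_rightInverse_iff_forall_nsmul_eq_zero {p : ℕ} [Fact p.Prime]
    {A B : Type*} [AddCommGroup A] [AddCommGroup B] {u : ZMod p →+ A} {h : A →+ B}
    (hu : Function.Injective u) (hh : Function.Surjective h) (hex : u.range = h.ker) :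
    (∃ s : B →+ A, ∀ b, h (s b) = b) ↔ ∀ b : B, p • b = 0 → ∀ a : A, h a = b → p • a = 0 := by
  refine ⟨fun ⟨s, hs⟩ b hb a ha => nsmul_eq_zero_of_rightInverse hex hs (ha ▸ hb), fun H => ?_⟩
  have hu1 : ∀ a : A, p • a ≠ u 1 := by
    intro a ha
    have hha : p • h a = 0 := by
      rw [← map_nsmul, ha, ← AddMonoidHom.mem_ker, ← hex]
      exact ⟨1, rfl⟩
    exact one_ne_zero (hu (by rw [← ha, H _ hha a rfl, map_zero]))
  obtain ⟨r, hr⟩ := exists_eq_one_of_forall_nsmul_ne p hu1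
  have hru : ∀ t, r (u t) = t := by
    intro t
    obtain ⟨k, rfl⟩ := ZMod.natCast_zmod_surjective t
    rw [← nsmul_one, map_nsmul, map_nsmul, hr]
  exact exists_rightInverse_of_leftInverse hh hex hru

/-- A short exact sequence `0 → ℤ/2 → A → B → 0` splits iff the associated
classifying homomorphism `Tor₂(B) → ℤ/2` is zero, i.e. iff `2a = 0` for every lift `a`
of every 2-torsion element of `B`. -/
theorem stmt2 {A B : Type*} [AddCommGroup A] [AddCommGroup B]
    (u : ZMod 2 →+ A) (h : A →+ B)
    (hu : Function.Injective u) (hh : Function.Surjective h)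
    (hex : u.range = h.ker) :
    (∃ s : B →+ A, ∀ b : B, h (s b) = b) ↔
      (∀ b : B, 2 • b = 0 → ∀ a : A, h a = b → 2 • a = 0) :=
  AddMonoidHom.exists_rightInverse_iff_forall_nsmul_eq_zero hu hh hex
end

section
/- Let 0 → ℤ/2 → A →h B → 0 be a short exact sequence of abelian groups, and write S = {b ∈ Tor₂(B) : some (equivalently any) preimage of b in A has order at most 2}. Then either S = Tor₂(B) or S is a subgroup of index 2 in Tor₂(B). -/
/-- For a short exact sequence `0 → ℤ/2 → A → B → 0`, the set
`S = {b ∈ Tor₂(B) : some preimage of b has order ≤ 2}` is a subgroup of `Tor₂(B)`,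
and either `S = Tor₂(B)` or `S` has index 2 in `Tor₂(B)` (i.e. `Tor₂(B)` is the union
of `S` and a single nontrivial coset of `S`). -/
theorem stmt4 {A B : Type*} [AddCommGroup A] [AddCommGroup B]
    (u : ZMod 2 →+ A) (h : A →+ B)
    (hu : Function.Injective u) (hh : Function.Surjective h)
    (hex : u.range = h.ker) :
    let S : Set B := {b | 2 • b = 0 ∧ ∃ a : A, h a = b ∧ 2 • a = 0}
    ((0 : B) ∈ S ∧ (∀ x ∈ S, ∀ y ∈ S, x + y ∈ S) ∧ (∀ x ∈ S, -x ∈ S)) ∧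
    (S = {b : B | 2 • b = 0} ∨
      ∃ b₀ : B, 2 • b₀ = 0 ∧ b₀ ∉ S ∧
        {b : B | 2 • b = 0} = S ∪ (fun b => b + b₀) '' S) := by
  intro S
  have hzmod : ∀ z : ZMod 2, (2 : ℕ) • z = 0 := by decide
  have hker2 : ∀ k : A, h k = 0 → (2 : ℕ) • k = 0 := by
    intro k hk
    have hk' : k ∈ h.ker := hk
    rw [← hex] at hk'
    obtain ⟨z, rfl⟩ := hk'
    rw [← map_nsmul, hzmod, map_zero]
  -- if b is 2-torsion and not in S, then every preimage a of b has 2•a = u 1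
  have key : ∀ b : B, 2 • b = 0 → b ∉ S → ∀ a : A, h a = b → (2 : ℕ) • a = u 1 := by
    intro b hb hbS a ha
    have h2a : h (2 • a) = 0 := by rw [map_nsmul, ha, hb]
    have : (2 : ℕ) • a ∈ u.range := by rw [hex]; exact h2a
    obtain ⟨z, hz⟩ := this
    have hzne : z ≠ 0 := by
      rintro rfl
      exact hbS ⟨hb, a, ha, by rw [← hz, map_zero]⟩
    have h01 : ∀ w : ZMod 2, w = 0 ∨ w = 1 := by decide
    rcases h01 z with rfl | rfl
    · exact absurd rfl hzne
    · exact hz.symm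
  constructor
  · refine ⟨⟨by simp, 0, by simp⟩, ?_, ?_⟩
    · rintro x ⟨hx2, a, ha, ha2⟩ y ⟨hy2, c, hc, hc2⟩
      refine ⟨by rw [smul_add, hx2, hy2, add_zero], a + c, by rw [map_add, ha, hc], ?_⟩
      rw [smul_add, ha2, hc2, add_zero]
    · rintro x ⟨hx2, a, ha, ha2⟩
      refine ⟨by rw [smul_neg, hx2, neg_zero], -a, by rw [map_neg, ha], ?_⟩
      rw [smul_neg, ha2, neg_zero]
  · by_cases hS : S = {b : B | 2 • b = 0}
    · exact Or.inl hS
    · right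
      have hsub : S ⊆ {b : B | 2 • b = 0} := fun b hb => hb.1
      obtain ⟨b₀, hb₀t, hb₀S⟩ : ∃ b₀ : B, 2 • b₀ = 0 ∧ b₀ ∉ S := by
        by_contra hcon
        push_neg at hcon
        exact hS (Set.Subset.antisymm hsub fun b hb => hcon b hb)
      refine ⟨b₀, hb₀t, hb₀S, Set.Subset.antisymm ?_ ?_⟩
      · intro b hb
        by_cases hbS : b ∈ S
        · exact Or.inl hbS
        · right
          refine ⟨b - b₀, ?_, by simp⟩
          obtain ⟨a, ha⟩ := hh b
          obtain ⟨a₀, ha₀⟩ := hh b₀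
          have h1 := key b hb hbS a ha
          have h2 := key b₀ hb₀t hb₀S a₀ ha₀
          refine ⟨by rw [smul_sub, hb, hb₀t, sub_zero], a - a₀, by rw [map_sub, ha, ha₀], ?_⟩
          rw [smul_sub, h1, h2, sub_self]
      · rintro b (hb | ⟨s, hs, rfl⟩)
        · exact hb.1
        · show 2 • (s + b₀) = 0
          rw [smul_add, hs.1, hb₀t, add_zero]
end

section
/- Let A be a 4×4 skew-symmetric integer matrix with determinant 0. Then either A = 0 or A has rank 2, and in the latter case, if d is the greatest common divisor of the entries of A, the cokernel of A: ℤ⁴ → ℤ⁴ is isomorphic to ℤ/d ⊕ ℤ/d ⊕ ℤ ⊕ ℤ. -/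
/-!
Since `det A = Pf(A)²`, the Pfaffian of `A` vanishes, and this makes every `2 × 2` minor of `A`
factor: `A i p * A j q - A i q * A j p = A i j * A p q`. If `c = A i j ≠ 0`, then `c` times any
column of `A` is a combination of the (independent) columns `i` and `j`, so the column lattice `N`
has rank 2. Take a Smith basis `N = a₀ ℤ u ⊕ a₁ ℤ v`. Every `2 × 2` minor of two vectors of `N` is
divisible by `a₀ a₁`, and the minors of the columns of `A` are the products of two entries, whose
gcd is `d²`; on the other hand `d` divides every vector of `N`, hence `a₀` and `a₁`. So
`a₀ a₁ = ± d²` forces `a₀ = ± d = ± a₁`, and the cokernel is `ℤ/a₀ ⊕ ℤ/a₁ ⊕ ℤ²`.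
-/

theorem Finset.dvd_gcd_mul_gcd {α β : Type*} [CommMonoidWithZero α] [StrongNormalizedGCDMonoid α]
    {s : Finset β} {f g : β → α} {d : α} (h : ∀ i ∈ s, ∀ j ∈ s, d ∣ f i * g j) :
    d ∣ s.gcd f * s.gcd g := by
  have hleft : ∀ i ∈ s, d ∣ f i * s.gcd g := fun i hi => by
    have := Finset.dvd_gcd (h i hi)
    rw [Finset.gcd_mul_left] at this
    exact this.trans (mul_dvd_mul_right (normalize_associated (f i)).dvd _)
  have := Finset.dvd_gcd hleft
  rw [Finset.gcd_mul_right] at this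
  exact this.trans (mul_dvd_mul_left _ (normalize_associated _).dvd)

theorem associated_of_dvd_of_mul_dvd_mul_self {α : Type*} [CommMonoidWithZero α]
    [IsCancelMulZero α] {g a b : α} (hg : g ≠ 0) (ha : g ∣ a) (hb : g ∣ b) (hab : a * b ∣ g * g) :
    Associated g a ∧ Associated g b := by
  obtain ⟨s, rfl⟩ := ha
  obtain ⟨t, rfl⟩ := hb
  have hab' : g * g * (s * t) ∣ g * g * 1 := by rwa [mul_one, ← mul_mul_mul_comm]
  have hst := isUnit_of_dvd_one ((mul_dvd_mul_iff_left (mul_ne_zero hg hg)).mp hab')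
  exact ⟨associated_mul_unit_right g s (isUnit_of_mul_isUnit_left hst),
    associated_mul_unit_right g t (isUnit_of_mul_isUnit_right hst)⟩

theorem Submodule.finrank_eq_of_le_of_forall_smul_mem {R M : Type*} [CommRing R] [IsDomain R]
    [IsNoetherianRing R] [AddCommGroup M] [Module R M] [Module.IsTorsionFree R M]
    [Module.Finite R M] {N P : Submodule R M} (hPN : P ≤ N) {c : R} (hc : c ≠ 0)
    (hcN : ∀ x ∈ N, c • x ∈ P) : Module.finrank R N = Module.finrank R P := by
  refine le_antisymm ?_ (Submodule.finrank_mono hPN)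
  let f : N →ₗ[R] P := (c • N.subtype).codRestrict P fun x => hcN x x.2
  refine LinearMap.finrank_le_finrank_of_injective (f := f) fun x y hxy => ?_
  exact Subtype.ext (smul_right_injective M hc (congrArg Subtype.val hxy))

namespace Module.Basis.SmithNormalForm

section

variable {R M ι : Type*} [CommRing R] [AddCommGroup M] [Module R M] {N : Submodule R M} {n : ℕ}

theorem mem_iff (snf : Basis.SmithNormalForm N ι n) {x : M} :
    x ∈ N ↔ (∀ k, snf.a k ∣ snf.bM.repr x (snf.f k)) ∧
      ∀ i ∉ Set.range snf.f, snf.bM.repr x i = 0 := by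
  refine ⟨fun hx => ⟨fun k => ?_, fun i hi => snf.repr_eq_zero_of_notMem_range ⟨x, hx⟩ hi⟩, ?_⟩
  · have := snf.repr_apply_embedding_eq_repr_smul ⟨x, hx⟩ (i := k)
    rw [map_smul] at this
    exact ⟨_, this⟩
  · rintro ⟨hdvd, hzero⟩
    choose t ht using hdvd
    have hx : x = ∑ k, t k • (snf.bN k : M) := by
      classical
      refine snf.bM.ext_elem fun i => ?_
      simp only [snf.snf, smul_smul, map_sum, map_smul, Basis.repr_self, Finsupp.coe_finsetSum,
        Finset.sum_apply, Finsupp.smul_apply, Finsupp.single_apply, smul_eq_mul, mul_ite, mul_one,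
        mul_zero]
      by_cases hi : i ∈ Set.range snf.f
      · obtain ⟨k, rfl⟩ := hi
        simp [ht, mul_comm]
      · rw [hzero i hi, Finset.sum_eq_zero]
        intro k _
        rw [if_neg fun h => hi ⟨k, h⟩]
    rw [hx]
    exact Submodule.sum_mem _ fun k _ => Submodule.smul_mem _ _ (snf.bN k).2

noncomputable def cokernelCoords (snf : Basis.SmithNormalForm N ι n) :
    M →ₗ[R] (Π k : Fin n, R ⧸ Ideal.span {snf.a k}) × (↥(Set.range snf.f)ᶜ → R) :=
  (LinearMap.pi fun k => (Ideal.span {snf.a k}).mkQ ∘ₗ snf.bM.coord (snf.f k)).prod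
    (LinearMap.pi fun i => snf.bM.coord i)

theorem ker_cokernelCoords (snf : Basis.SmithNormalForm N ι n) :
    LinearMap.ker snf.cokernelCoords = N := by
  ext x
  simp [cokernelCoords, snf.mem_iff, Ideal.Quotient.eq_zero_iff_mem, Ideal.mem_span_singleton,
    funext_iff]

theorem cokernelCoords_surjective [Finite ι] (snf : Basis.SmithNormalForm N ι n) :
    Function.Surjective snf.cokernelCoords := by
  classical
  rintro ⟨q, y⟩
  choose u hu using fun k => Submodule.Quotient.mk_surjective _ (q k)
  let v : ι → R :=
    Function.extend snf.f u fun i => if h : i ∈ Set.range snf.f then 0 else y ⟨i, h⟩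
  have hv_range (k : Fin n) : v (snf.f k) = u k := snf.f.injective.extend_apply _ _ _
  have hv_compl (i : ↥(Set.range snf.f)ᶜ) : v i = y i := by
    simp only [v]
    rw [Function.extend_apply' _ _ _ fun ⟨k, hk⟩ => i.2 ⟨k, hk⟩, dif_neg i.2]
  obtain ⟨x, hx⟩ := snf.bM.equivFun.surjective v
  refine ⟨x, ?_⟩
  ext k
  · simpa [cokernelCoords, ← Basis.equivFun_apply, hx, hv_range] using hu k
  · simp [cokernelCoords, ← Basis.equivFun_apply, hx, hv_compl]

noncomputable def quotientEquiv [Finite ι] (snf : Basis.SmithNormalForm N ι n) :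
    (M ⧸ N) ≃ₗ[R] (Π k : Fin n, R ⧸ Ideal.span {snf.a k}) × (↥(Set.range snf.f)ᶜ → R) :=
  (Submodule.quotEquivOfEq _ _ snf.ker_cokernelCoords.symm).trans
    (snf.cokernelCoords.quotKerEquivOfSurjective snf.cokernelCoords_surjective)

theorem dvd_a_of_forall_mem (snf : Basis.SmithNormalForm N ι n) {g : R}
    (h : ∀ x ∈ N, ∃ y, x = g • y) (k : Fin n) : g ∣ snf.a k := by
  obtain ⟨y, hy⟩ := h _ (snf.bN k).2
  refine ⟨snf.bM.repr y (snf.f k), ?_⟩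
  simpa [snf.snf] using congrArg (fun z => snf.bM.repr z (snf.f k)) hy

theorem a_mul_a_dvd_mul_sub_mul (snf : Basis.SmithNormalForm N ι 2) (φ ψ : M →ₗ[R] R) {x y : M}
    (hx : x ∈ N) (hy : y ∈ N) : snf.a 0 * snf.a 1 ∣ φ x * ψ y - φ y * ψ x := by
  have hsum : ∀ z ∈ N, ∃ α β : R,
      z = (α * snf.a 0) • snf.bM (snf.f 0) + (β * snf.a 1) • snf.bM (snf.f 1) := fun z hz => by
    have := congrArg Subtype.val (snf.bN.sum_repr ⟨z, hz⟩)
    simp only [Fin.sum_univ_two, Submodule.coe_add, Submodule.coe_smul, snf.snf, smul_smul] at this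
    exact ⟨_, _, this.symm⟩
  obtain ⟨α, β, rfl⟩ := hsum x hx
  obtain ⟨γ, δ, rfl⟩ := hsum y hy
  simp only [map_add, map_smul, smul_eq_mul]
  exact ⟨(α * δ - β * γ) * (φ (snf.bM (snf.f 0)) * ψ (snf.bM (snf.f 1)) -
    φ (snf.bM (snf.f 1)) * ψ (snf.bM (snf.f 0))), by ring⟩

end

noncomputable def quotientAddEquivZModProd {M ι : Type*} [AddCommGroup M] [Fintype ι]
    {N : Submodule ℤ M} (snf : Basis.SmithNormalForm N ι 2) (hι : Fintype.card ι = 4) :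
    (M ⧸ N) ≃+ ZMod (snf.a 0).natAbs × ZMod (snf.a 1).natAbs × ℤ × ℤ := by
  classical
  have hcompl : Fintype.card ↥(Set.range snf.f)ᶜ = 2 := by
    rw [Fintype.card_compl_set, hι, Set.card_range_of_injective snf.f.injective, Fintype.card_fin]
  refine snf.quotientEquiv.toAddEquiv.trans ((AddEquiv.prodCongr ?_ ?_).trans AddEquiv.prodAssoc)
  · exact (LinearEquiv.piFinTwo ℤ _).toAddEquiv.trans
      (AddEquiv.prodCongr (Int.quotientSpanEquivZMod _).toAddEquiv
        (Int.quotientSpanEquivZMod _).toAddEquiv)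
  · exact (LinearEquiv.funCongrLeft ℤ ℤ (Fintype.equivFinOfCardEq hcompl).symm).toAddEquiv.trans
      (LinearEquiv.finTwoArrow ℤ ℤ).toAddEquiv

end Module.Basis.SmithNormalForm

namespace Matrix

section Pfaffian

variable {R : Type*} [CommRing R]

def pfaffianFour (A : Matrix (Fin 4) (Fin 4) R) : R :=
  A 0 1 * A 2 3 - A 0 2 * A 1 3 + A 0 3 * A 1 2

variable {A : Matrix (Fin 4) (Fin 4) R}

theorem eta_fin_four_of_transpose_eq_neg (hskew : Aᵀ = -A) (hdiag : ∀ i, A i i = 0) :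
    A = !![0, A 0 1, A 0 2, A 0 3; -A 0 1, 0, A 1 2, A 1 3;
      -A 0 2, -A 1 2, 0, A 2 3; -A 0 3, -A 1 3, -A 2 3, 0] := by
  have hs : ∀ i j, A j i = -A i j := fun i j => congrFun (congrFun hskew i) j
  ext i j
  fin_cases i <;> fin_cases j <;> first | rfl | exact hdiag _ | exact hs _ _

theorem det_eq_pfaffianFour_sq (hskew : Aᵀ = -A) (hdiag : ∀ i, A i i = 0) :
    A.det = A.pfaffianFour ^ 2 := by
  rw [eta_fin_four_of_transpose_eq_neg hskew hdiag, det_succ_row_zero]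
  simp [Fin.sum_univ_succ, det_fin_three, submatrix, Fin.succAbove, pfaffianFour]
  ring

theorem mul_sub_mul_eq_mul_of_pfaffianFour_eq_zero (hskew : Aᵀ = -A) (hdiag : ∀ i, A i i = 0)
    (hpf : A.pfaffianFour = 0) (i j p q : Fin 4) :
    A i p * A j q - A i q * A j p = A i j * A p q := by
  rw [eta_fin_four_of_transpose_eq_neg hskew hdiag]
  unfold pfaffianFour at hpf
  fin_cases i <;> fin_cases j <;> fin_cases p <;> fin_cases q <;>
    simp <;> first | ring1 | linear_combination hpf | linear_combination -hpf

theorem smul_col_eq_of_pfaffianFour_eq_zero (hskew : Aᵀ = -A) (hdiag : ∀ i, A i i = 0)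
    (hpf : A.pfaffianFour = 0) (i j q : Fin 4) :
    A i j • A.col q = A q j • A.col i - A q i • A.col j := by
  ext p
  simp only [col, Pi.smul_apply, Pi.sub_apply, transpose_apply, smul_eq_mul]
  linear_combination -mul_sub_mul_eq_mul_of_pfaffianFour_eq_zero hskew hdiag hpf p q i j

end Pfaffian

theorem linearIndependent_col_pair {n R : Type*} [CommRing R] [IsDomain R] {A : Matrix n n R}
    (hskew : Aᵀ = -A) (hdiag : ∀ i, A i i = 0) {i j : n} (hij : A i j ≠ 0) :
    LinearIndependent R ![A.col i, A.col j] := by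
  rw [LinearIndependent.pair_iff]
  intro s t hst
  have hi := congrFun hst i
  have hj := congrFun hst j
  have hji : A j i = -A i j := congrFun (congrFun hskew i) j
  simp [col, hdiag, hji] at hi hj
  tauto

theorem rank_eq_two_of_pfaffianFour_eq_zero {R : Type*} [CommRing R] [IsDomain R]
    [IsNoetherianRing R] {A : Matrix (Fin 4) (Fin 4) R} (hskew : Aᵀ = -A)
    (hdiag : ∀ i, A i i = 0) (hpf : A.pfaffianFour = 0) (hA : A ≠ 0) : A.rank = 2 := by
  obtain ⟨i, j, hij⟩ : ∃ i j, A i j ≠ 0 := by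
    by_contra! h
    exact hA (ext h)
  set P := Submodule.span R (Set.range ![A.col i, A.col j])
  have hP : P ≤ LinearMap.range A.mulVecLin := by
    rw [range_mulVecLin]
    refine Submodule.span_mono ?_
    rintro _ ⟨k, rfl⟩
    fin_cases k <;> simp
  have hcol (q : Fin 4) : A i j • A.col q ∈ P := by
    rw [smul_col_eq_of_pfaffianFour_eq_zero hskew hdiag hpf]
    exact sub_mem (Submodule.smul_mem _ _ (Submodule.subset_span ⟨0, rfl⟩))
      (Submodule.smul_mem _ _ (Submodule.subset_span ⟨1, rfl⟩))
  have hsmul (x : Fin 4 → R) (hx : x ∈ LinearMap.range A.mulVecLin) : A i j • x ∈ P := by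
    rw [range_mulVecLin] at hx
    refine (Submodule.span_le (p := P.comap (A i j • LinearMap.id))).mpr ?_ hx
    rintro _ ⟨q, rfl⟩
    exact hcol q
  rw [rank, Submodule.finrank_eq_of_le_of_forall_smul_mem hP hij hsmul,
    finrank_span_eq_card (linearIndependent_col_pair hskew hdiag hij), Fintype.card_fin]

theorem associated_gcd_smithNormalForm_a {ι : Type*} {A : Matrix (Fin 4) (Fin 4) ℤ}
    (hskew : Aᵀ = -A) (hdiag : ∀ i, A i i = 0) (hpf : A.pfaffianFour = 0) (hA : A ≠ 0)
    (snf : Module.Basis.SmithNormalForm (LinearMap.range A.mulVecLin) ι 2) :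
    Associated (Finset.univ.gcd fun p : Fin 4 × Fin 4 => A p.1 p.2) (snf.a 0) ∧
      Associated (Finset.univ.gcd fun p : Fin 4 × Fin 4 => A p.1 p.2) (snf.a 1) := by
  set g := Finset.univ.gcd fun p : Fin 4 × Fin 4 => A p.1 p.2
  have hg : g ≠ 0 := fun h =>
    hA (ext fun p q => Finset.gcd_eq_zero_iff.mp h (p, q) (Finset.mem_univ _))
  have hmul (x : Fin 4 → ℤ) (hx : x ∈ LinearMap.range A.mulVecLin) : ∃ y, x = g • y := by
    choose B hB using fun p q =>
      Finset.gcd_dvd (Finset.mem_univ (p, q)) (f := fun p : Fin 4 × Fin 4 => A p.1 p.2)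
    have hAB : A = g • of B := by
      ext p q
      exact hB p q
    obtain ⟨w, rfl⟩ := hx
    refine ⟨of B *ᵥ w, ?_⟩
    rw [← smul_mulVec, ← hAB]
    rfl
  have hcol (q : Fin 4) : A.col q ∈ LinearMap.range A.mulVecLin := by
    rw [range_mulVecLin]
    exact Submodule.subset_span ⟨q, rfl⟩
  have hprod : snf.a 0 * snf.a 1 ∣ g * g := Finset.dvd_gcd_mul_gcd fun p _ q _ => by
    simpa [col, mul_sub_mul_eq_mul_of_pfaffianFour_eq_zero hskew hdiag hpf] using
      snf.a_mul_a_dvd_mul_sub_mul (LinearMap.proj p.1) (LinearMap.proj p.2) (hcol q.1) (hcol q.2)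
  exact associated_of_dvd_of_mul_dvd_mul_self hg (snf.dvd_a_of_forall_mem hmul 0)
    (snf.dvd_a_of_forall_mem hmul 1) hprod

end Matrix

/-- A 4×4 skew-symmetric integer matrix `A` with `det A = 0` is either zero
or of rank 2, and in the latter case, with `d` the gcd of its entries, the cokernel
`ℤ⁴ / A(ℤ⁴)` is isomorphic to `ℤ/d ⊕ ℤ/d ⊕ ℤ ⊕ ℤ`. -/
theorem stmt11 (A : Matrix (Fin 4) (Fin 4) ℤ)
    (hskew : A.transpose = -A) (hdet : A.det = 0) :
    (A = 0 ∨ A.rank = 2) ∧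
    (A ≠ 0 →
      Nonempty (((Fin 4 → ℤ) ⧸ LinearMap.range (Matrix.toLin' A)) ≃+
        (ZMod ((Finset.univ.gcd fun p : Fin 4 × Fin 4 => A p.1 p.2).natAbs) ×
         ZMod ((Finset.univ.gcd fun p : Fin 4 × Fin 4 => A p.1 p.2).natAbs) × ℤ × ℤ))) := by
  have hdiag (i : Fin 4) : A i i = 0 := by
    have := congrFun (congrFun hskew i) i
    simp only [Matrix.transpose_apply, Matrix.neg_apply] at this
    omega
  have hpf : A.pfaffianFour = 0 :=
    pow_eq_zero_iff two_ne_zero |>.mp (Matrix.det_eq_pfaffianFour_sq hskew hdiag ▸ hdet)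
  rcases eq_or_ne A 0 with hA | hA
  · exact ⟨Or.inl hA, fun h => absurd hA h⟩
  have hrank := Matrix.rank_eq_two_of_pfaffianFour_eq_zero hskew hdiag hpf hA
  refine ⟨Or.inr hrank, fun _ => ?_⟩
  obtain ⟨n, snf⟩ := (LinearMap.range A.mulVecLin).smithNormalForm (Pi.basisFun ℤ (Fin 4))
  obtain rfl : n = 2 := by
    rw [← hrank, Matrix.rank, Module.finrank_eq_card_basis snf.bN, Fintype.card_fin]
  obtain ⟨h0, h1⟩ := Matrix.associated_gcd_smithNormalForm_a hskew hdiag hpf hA snf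
  have e := snf.quotientAddEquivZModProd (Fintype.card_fin 4)
  rw [← Int.associated_iff_natAbs.mp h0, ← Int.associated_iff_natAbs.mp h1] at e
  exact ⟨e⟩
end

section
/- Let B be an abelian group of the form ℤ/2^{k} ⊕ C, and let 0 → ℤ/2 → A → B → 0 be a short exact sequence classified (via the Eilenberg–MacLane correspondence Ext(B, ℤ/2) ≅ Hom(Tor₂(B), ℤ/2)) by a homomorphism φ: Tor₂(B) → ℤ/2 that is nonzero on the 2-torsion element 2^{k−1} of the summand ℤ/2^{k} and zero on Tor₂(C). Then A ≅ ℤ/2^{k+1} ⊕ C. -/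
/-!
Lift the generator of `ℤ/2^k` to `a ∈ A`. The value of `φ` at `2^(k-1)` says `2^k • a = u 1 ≠ 0`,
so `a` has order `2^(k+1)`. The preimage `P` of `0 × C` is an extension of `C` by `ℤ/2` in which
`u 1` is not divisible by `2` (this is `φ = 0` on `Tor₂ C`), so some character `P → ℤ/2`, a
functional on the `𝔽₂`-vector space `P/2P`, is `1` on `u 1`; its kernel maps isomorphically
onto `C`, giving a section `σ : C → A`. Then `(z, c) ↦ z • a + σ c` is an isomorphism
`ℤ/2^(k+1) × C ≃ A`.
-/

open Function

theorem ZMod.eq_zero_or_one_of_two (z : ZMod 2) : z = 0 ∨ z = 1 := by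
  revert z; decide

theorem AddMonoidHom.mem_range_zmod_two_iff {A : Type*} [AddCommGroup A] (u : ZMod 2 →+ A)
    {x : A} : x ∈ u.range ↔ x = 0 ∨ x = u 1 := by
  constructor
  · rintro ⟨s, rfl⟩
    rcases ZMod.eq_zero_or_one_of_two s with rfl | rfl <;> simp
  · rintro (rfl | rfl)
    exacts [zero_mem _, ⟨1, rfl⟩]

theorem exists_addMonoidHom_zmod_two_apply_eq_one {G : Type*} [AddCommGroup G] {t : G}
    (ht : ∀ x : G, 2 • x ≠ t) : ∃ f : G →+ ZMod 2, f t = 1 := by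
  let H : AddSubgroup G := (nsmulAddMonoidHom 2 : G →+ G).range
  let := QuotientAddGroup.zmodModule (n := 2) (H := H) fun x => ⟨x, rfl⟩
  have hne : (t : G ⧸ H) ≠ 0 := by
    rw [Ne, QuotientAddGroup.eq_zero_iff]
    rintro ⟨x, hx⟩
    exact ht x hx
  obtain ⟨φ, hφ⟩ := Module.Projective.exists_dual_eq_one (ZMod 2) hne
  exact ⟨φ.toAddMonoidHom.comp (QuotientAddGroup.mk' H), hφ⟩

theorem AddMonoidHom.exists_rightInverse_of_ker_eq_pair {P C : Type*} [AddCommGroup P]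
    [AddCommGroup C] (q : P →+ C) (hq : Surjective q) {t : P}
    (hker : ∀ x, q x = 0 ↔ x = 0 ∨ x = t) (ht : ∀ x : P, 2 • x ≠ t) :
    ∃ σ : C →+ P, RightInverse σ q := by
  obtain ⟨f, hft⟩ := exists_addMonoidHom_zmod_two_apply_eq_one ht
  have hbij : Bijective (q.comp f.ker.subtype) := by
    refine ⟨(injective_iff_map_eq_zero _).2 ?_, fun c => ?_⟩
    · rintro ⟨s, hs⟩ hqs
      rcases (hker s).1 hqs with rfl | rfl
      · rfl
      · simp [hft] at hs
    · obtain ⟨p, rfl⟩ := hq c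
      have hqt : q t = 0 := (hker t).2 (Or.inr rfl)
      rcases ZMod.eq_zero_or_one_of_two (f p) with hp | hp
      · exact ⟨⟨p, hp⟩, rfl⟩
      · exact ⟨⟨p - t, by simp [hp, hft]⟩, by simp [hqt]⟩
  let e := AddEquiv.ofBijective _ hbij
  exact ⟨f.ker.subtype.comp e.symm.toAddMonoidHom, e.apply_symm_apply⟩

theorem AddMonoidHom.exists_section_snd_of_ker_eq_pair {A B C : Type*} [AddCommGroup A]
    [AddCommGroup B] [AddCommGroup C] (h : A →+ B × C) (hh : ∀ c, ∃ y, h y = (0, c)) {t : A}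
    (hker : ∀ x, h x = 0 ↔ x = 0 ∨ x = t) (ht : ∀ x, (h x).1 = 0 → 2 • x ≠ t) :
    ∃ σ : C →+ A, ∀ c, h (σ c) = (0, c) := by
  let P := ((AddMonoidHom.fst B C).comp h).ker
  let q := (AddMonoidHom.snd B C).comp (h.comp P.subtype)
  have hP : ∀ x : P, h x = (0, q x) := fun x => Prod.ext x.2 rfl
  have htP : t ∈ P := by simp [P, (hker t).2 (Or.inr rfl)]
  have hq : Surjective q := fun c => by
    obtain ⟨y, hy⟩ := hh c
    exact ⟨⟨y, by simp [P, hy]⟩, by simp [q, hy]⟩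
  have hqker : ∀ x, q x = 0 ↔ x = 0 ∨ x = ⟨t, htP⟩ := fun x => by
    rw [Subtype.ext_iff, Subtype.ext_iff, ZeroMemClass.coe_zero, ← hker, hP x, Prod.mk_eq_zero,
      and_iff_right rfl]
  obtain ⟨σ, hσ⟩ := q.exists_rightInverse_of_ker_eq_pair hq hqker
    fun x hx => ht x x.2 (congrArg Subtype.val hx)
  exact ⟨P.subtype.comp σ, fun c => by simp [hP, hσ c]⟩

theorem exists_injective_zmod_addMonoidHom_of_addOrderOf_eq {A : Type*} [AddGroup A] {a : A}
    {n : ℕ} (ha : addOrderOf a = n) : ∃ ι : ZMod n →+ A, Injective ι ∧ ∀ m : ℤ, ι m = m • a := by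
  have hna : ((n : ℕ) : ℤ) • a = 0 := by rw [natCast_zsmul, ← ha, addOrderOf_nsmul_eq_zero]
  refine ⟨ZMod.lift n ⟨zmultiplesHom A a, hna⟩, (ZMod.lift_injective n).2 fun m hm => ?_,
    ZMod.lift_coe _ _⟩
  rw [ZMod.intCast_zmod_eq_zero_iff_dvd, ← ha]
  exact addOrderOf_dvd_iff_zsmul_eq_zero.2 hm

theorem AddMonoidHom.coprod_bijective_of_ker_le_range {A B C D : Type*} [AddCommGroup A]
    [AddCommGroup B] [AddCommGroup C] [AddCommGroup D] (h : A →+ B × C) (r : D →+ B)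
    (hr : Surjective r) (ι : D →+ A) (σ : C →+ A) (hι : ∀ d, h (ι d) = (r d, 0))
    (hσ : ∀ c, h (σ c) = (0, c)) (hιinj : Injective ι) (hker : h.ker ≤ ι.range) :
    Bijective (ι.coprod σ) := by
  refine ⟨(injective_iff_map_eq_zero _).2 ?_, fun x => ?_⟩
  · rintro ⟨d, c⟩ hdc
    have hsum : ι d + σ c = 0 := hdc
    have hc : c = 0 := by simpa [hι, hσ] using congrArg (fun y => (h y).2) hsum
    subst hc
    have hd : d = 0 := hιinj (by simpa using hsum)
    simp [hd]
  · obtain ⟨d, hd⟩ := hr (h x).1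
    obtain ⟨d', hd'⟩ := hker (x := x - ι d - σ (h x).2) (by
      rw [AddMonoidHom.mem_ker, map_sub, map_sub, hι, hσ, hd]
      ext <;> simp)
    exact ⟨(d + d', (h x).2), by simp only [coprod_apply, map_add, hd']; abel⟩

theorem nonempty_addEquiv_zmod_prod_of_section {A C : Type*} [AddCommGroup A] [AddCommGroup C]
    {m n : ℕ} (hmn : m ∣ n) (h : A →+ ZMod m × C) {a : A} (ha : h a = (1, 0))
    (hord : addOrderOf a = n) (hker : h.ker ≤ AddSubgroup.zmultiples a) (σ : C →+ A)
    (hσ : ∀ c, h (σ c) = (0, c)) : Nonempty (A ≃+ ZMod n × C) := by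
  obtain ⟨ι, hιinj, hι⟩ := exists_injective_zmod_addMonoidHom_of_addOrderOf_eq hord
  have hιr : ∀ d, h (ι d) = (ZMod.castHom hmn (ZMod m) d, 0) := fun d => by
    obtain ⟨j, rfl⟩ := ZMod.intCast_surjective d
    simp [hι, ha]
  have hkerι : h.ker ≤ ι.range := fun x hx => by
    obtain ⟨j, rfl⟩ := AddSubgroup.mem_zmultiples_iff.1 (hker hx)
    exact ⟨j, hι j⟩
  exact ⟨(AddEquiv.ofBijective _ (h.coprod_bijective_of_ker_le_range
    (ZMod.castHom hmn _).toAddMonoidHom (ZMod.castHom_surjective hmn) ι σ hιr hσ hιinj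
    hkerι)).symm⟩

/-- Let `B = ℤ/2^k ⊕ C` and let `0 → ℤ/2 → A → B → 0` be a short exact
sequence whose classifying homomorphism `φ : Tor₂(B) → ℤ/2` is nonzero on the 2-torsion
element `2^(k-1)` of `ℤ/2^k` (i.e. `2a = u 1` for lifts `a` of `(2^(k-1), 0)`) and zero
on `Tor₂(C)` (i.e. `2a = 0` for lifts of `(0, c)` with `2c = 0`). Then
`A ≅ ℤ/2^(k+1) ⊕ C`. -/
theorem stmt14 (k : ℕ) (hk : 1 ≤ k) {C A : Type*} [AddCommGroup C] [AddCommGroup A]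
    (u : ZMod 2 →+ A) (h : A →+ ZMod (2 ^ k) × C)
    (hu : Function.Injective u) (hh : Function.Surjective h)
    (hex : u.range = h.ker)
    (hφ1 : ∀ a : A, h a = ((2 ^ (k - 1) : ZMod (2 ^ k)), 0) → 2 • a = u 1)
    (hφ2 : ∀ c : C, 2 • c = 0 → ∀ a : A, h a = (0, c) → 2 • a = 0) :
    Nonempty (A ≃+ ZMod (2 ^ (k + 1)) × C) := by
  set t := u 1
  have hker : ∀ x, h x = 0 ↔ x = 0 ∨ x = t := fun x => by
    rw [← AddMonoidHom.mem_ker, ← hex, u.mem_range_zmod_two_iff]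
  have ht0 : t ≠ 0 := fun h0 => one_ne_zero (hu (h0.trans u.map_zero.symm))
  have h2t : 2 • t = 0 := by rw [← map_nsmul, show (2 • 1 : ZMod 2) = 0 by decide, map_zero]
  obtain ⟨a, ha⟩ := hh (1, 0)
  have h2k : 2 ^ k • a = t := by
    have := hφ1 (2 ^ (k - 1) • a) (by simp [ha])
    rwa [smul_smul, ← pow_succ', Nat.sub_add_cancel hk] at this
  have ht2 : ∀ x, (h x).1 = 0 → 2 • x ≠ t := fun x hx1 h2x => by
    have h2c : 2 • (h x).2 = 0 := by
      simpa [← h2x] using congrArg Prod.snd ((hker t).2 (Or.inr rfl))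
    exact ht0 (h2x ▸ hφ2 _ h2c x (Prod.ext hx1 rfl))
  obtain ⟨σ, hσ⟩ := h.exists_section_snd_of_ker_eq_pair (fun c => hh (0, c)) hker ht2
  refine nonempty_addEquiv_zmod_prod_of_section (pow_dvd_pow 2 k.le_succ) h ha
    (addOrderOf_eq_prime_pow (by rwa [h2k]) (by rw [pow_succ, mul_nsmul, h2k, h2t]))
    (fun x hx => ?_) σ hσ
  rcases (hker x).1 hx with rfl | rfl
  exacts [zero_mem _, h2k ▸ nsmul_mem (AddSubgroup.mem_zmultiples a) _]
end

section
/- Consider abelian groups and homomorphisms as follows: a short exact sequence 0 → ℤ/2 →u₁ F₁ →h₁ H₁ → 0, homomorphisms τ: F₃ → F₁ and i: H₃ → H₁, an isomorphism φ: F₃ → H₃ with h₁ ∘ τ = (2i) ∘ φ. If u₁(1) ∉ im(τ), then the induced sequence 0 → ℤ/2 → coker(τ) → coker(2i) → 0 is exact. -/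
/-- Given a short exact sequence `0 → ℤ/2 → F₁ → H₁ → 0`, homomorphisms
`τ : F₃ → F₁`, `i : H₃ → H₁` and an isomorphism `φ : F₃ ≅ H₃` with `h₁ ∘ τ = 2i ∘ φ`,
if `u₁(1) ∉ im(τ)` then the induced sequence `0 → ℤ/2 → coker(τ) → coker(2i) → 0`
is exact. -/
theorem stmt18 {F1 H1 F3 H3 : Type*}
    [AddCommGroup F1] [AddCommGroup H1] [AddCommGroup F3] [AddCommGroup H3]
    (u1 : ZMod 2 →+ F1) (h1 : F1 →+ H1)
    (hu : Function.Injective u1) (hh : Function.Surjective h1)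
    (hex : u1.range = h1.ker)
    (τ : F3 →+ F1) (i : H3 →+ H1) (φ : F3 ≃+ H3)
    (hcomm : ∀ x : F3, h1 (τ x) = 2 • i (φ x))
    (htw : u1 1 ∉ τ.range) :
    ∃ h' : (F1 ⧸ τ.range) →+ (H1 ⧸ (2 • i : H3 →+ H1).range),
      (∀ x : F1, h' (QuotientAddGroup.mk x) = QuotientAddGroup.mk (h1 x)) ∧
      Function.Injective (fun t : ZMod 2 => (QuotientAddGroup.mk (u1 t) : F1 ⧸ τ.range)) ∧
      Function.Surjective h' ∧
      (∀ y : F1 ⧸ τ.range, h' y = 0 ↔ ∃ t : ZMod 2, QuotientAddGroup.mk (u1 t) = y) := by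
  have hle : τ.range ≤ ((2 • i : H3 →+ H1).range).comap h1 := by
    rintro x ⟨w, rfl⟩
    refine ⟨φ w, ?_⟩
    simpa using (hcomm w).symm
  refine ⟨QuotientAddGroup.map _ _ h1 hle, fun x => rfl, ?_, ?_, ?_⟩
  · intro t1 t2 h
    have h' : u1 (t2 - t1) ∈ τ.range := by
      have := QuotientAddGroup.eq.mp h
      rw [map_sub]
      simpa [sub_eq_neg_add] using this
    have h0 : t2 - t1 = 0 := by
      rcases (show ∀ a : ZMod 2, a = 0 ∨ a = 1 by decide) (t2 - t1) with h0 | h1'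
      · exact h0
      · rw [h1'] at h'; exact absurd h' htw
    exact (sub_eq_zero.mp h0).symm
  · intro y
    obtain ⟨z, rfl⟩ := QuotientAddGroup.mk_surjective y
    obtain ⟨x, rfl⟩ := hh z
    exact ⟨QuotientAddGroup.mk x, rfl⟩
  · intro y
    obtain ⟨x, rfl⟩ := QuotientAddGroup.mk_surjective y
    constructor
    · intro h0
      have : h1 x ∈ (2 • i : H3 →+ H1).range := by
        rwa [show (QuotientAddGroup.map _ _ h1 hle) (QuotientAddGroup.mk x)
          = QuotientAddGroup.mk (h1 x) from rfl, QuotientAddGroup.eq_zero_iff] at h0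
      obtain ⟨z, hz⟩ := this
      obtain ⟨w, rfl⟩ := φ.surjective z
      have hxk : x - τ w ∈ h1.ker := by
        simp only [AddMonoidHom.mem_ker, map_sub, hcomm w]
        rw [sub_eq_zero]; exact hz.symm
      rw [← hex] at hxk
      obtain ⟨t, ht⟩ := hxk
      refine ⟨t, ?_⟩
      rw [QuotientAddGroup.eq]
      exact ⟨w, by rw [ht]; abel⟩
    · rintro ⟨t, ht⟩
      rw [← ht]
      have : h1 (u1 t) = 0 := by
        have : u1 t ∈ h1.ker := hex ▸ ⟨t, rfl⟩
        exact this
      show (QuotientAddGroup.mk (h1 (u1 t)) : H1 ⧸ (2 • i : H3 →+ H1).range) = 0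
      rw [this]; rfl
end
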